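/- arXiv:1309.5354 — 8 statements merged into one kernel-verified Lean document; each statement's English description precedes it below -/
import Mathlib

section
/- Let Γ be a group, Γ₀ ≤ Γ a subgroup, and Γ₁ ≤ Γ a torsion-free subgroup. Let F be a finite nonempty subset of the coset space Γ/Γ₀ such that g⁻¹Γ₁g ∩ Γ₀ = {e} for every coset gΓ₀ ∈ F. Then the setwise stabilizer {h ∈ Γ₁ : h • F = F} of F under the left-translation action of Γ₁ on Γ/Γ₀ is the trivial subgroup {e}. -/
open Pointwise

/-! If `h ∈ Γ₁` stabilizes `F`, then some positive power `h ^ n` fixes `F` pointwise, because `h`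
permutes the finite set `F`. For a point `gΓ₀ ∈ F` this puts `g⁻¹ h ^ n g` in `Γ₀`, so the
hypothesis on `F` forces `h ^ n = 1`, and torsion-freeness of `Γ₁` gives `h = 1`. -/

theorem exists_pow_smul_eq_of_smul_set_eq {G α : Type*} [Group G] [MulAction G α] {s : Set α}
    (hs : s.Finite) {g : G} (hg : g • s = s) : ∃ n, 0 < n ∧ ∀ a ∈ s, g ^ n • a = a := by
  have := hs.to_subtype
  let k : MulAction.stabilizer G s := ⟨g, hg⟩
  obtain ⟨n, hn, hk⟩ := (isOfFinOrder_of_finite (MulAction.toPermHom _ s k)).exists_pow_eq_one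
  refine ⟨n, hn, fun a ha => ?_⟩
  rw [← map_pow] at hk
  exact congrArg Subtype.val (Equiv.ext_iff.mp hk ⟨a, ha⟩)

theorem QuotientGroup.smul_mk_eq_mk_iff {G : Type*} [Group G] {H : Subgroup G} {g h : G} :
    h • (g : G ⧸ H) = g ↔ g⁻¹ * h * g ∈ H := by
  rw [eq_comm, MulAction.Quotient.smul_coe, QuotientGroup.eq, smul_eq_mul, mul_assoc]

/-- Let `Γ` be a group, `Γ₀ ≤ Γ` a subgroup and `Γ₁ ≤ Γ` a torsion-free subgroup.
If `F` is a finite nonempty subset of `Γ/Γ₀` such that `g⁻¹ Γ₁ g ∩ Γ₀ = {e}` for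
every coset `gΓ₀ ∈ F`, then the setwise stabilizer of `F` in `Γ₁` is trivial. -/
theorem stmt0 {Γ : Type*} [Group Γ] (Γ₀ Γ₁ : Subgroup Γ)
    (hΓ₁ : ∀ g : Γ₁, g ≠ 1 → ¬IsOfFinOrder g)
    (F : Set (Γ ⧸ Γ₀)) (hFfin : F.Finite) (hFne : F.Nonempty)
    (htriv : ∀ g : Γ, (g : Γ ⧸ Γ₀) ∈ F → ∀ h ∈ Γ₁, g⁻¹ * h * g ∈ Γ₀ → h = 1) :
    ∀ h ∈ Γ₁, h • F = F → h = 1 := by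
  intro h hh hF
  obtain ⟨n, hn, hfix⟩ := exists_pow_smul_eq_of_smul_set_eq hFfin hF
  obtain ⟨x, hx⟩ := hFne
  obtain ⟨g, rfl⟩ := QuotientGroup.mk_surjective x
  have hpow : h ^ n = 1 :=
    htriv g hx _ (pow_mem hh n) (QuotientGroup.smul_mk_eq_mk_iff.mp (hfix _ hx))
  by_contra hne
  exact hΓ₁ ⟨h, hh⟩ (by simpa using hne)
    (isOfFinOrder_iff_pow_eq_one.mpr ⟨n, hn, Subtype.ext hpow⟩)
end

section
/- Let n ≥ 2 be an integer and m ≥ 3 a prime number, and let Γ = (ℤ/nℤ) ∗ (ℤ/mℤ) be the free product, with a and b the canonical generators of the two free factors. Then the element ab has infinite order in Γ and the cyclic subgroup Γ₀ = ⟨ab⟩ is malnormal in Γ. -/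
/-!
The free product acts on reduced words (van der Waerden's trick), which gives normal forms.
Write `c = a b`. For every `g`, the normal form of `c ^ i * g` is, for `i` large, the
alternating word `(a b)ⁱ` followed by a fixed word; similarly `g * c ^ i` ends in `(a b)ⁱ`
and `c⁻¹ ^ i * g` begins with `(b⁻¹ a⁻¹)ⁱ`. If `g c^k g⁻¹ = c^l` with `k ≠ 0`, raise both
sides to a large power and compare the normal forms of `g c^K = c^L g`. When `k` and `l` have
the same sign the two words can only agree if `c ^ j * g` has the normal form of a power of
`c`, so `g ∈ ⟨c⟩`; when the signs differ, a letter `b⁻¹` would have to face a letter `b`,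
which `b² ≠ 1` rules out.
-/

namespace List

variable {α β : Type*}

def alternating (x y : α) : ℕ → List α
  | 0 => []
  | n + 1 => x :: alternating y x n

@[simp] theorem alternating_zero (x y : α) : alternating x y 0 = [] := rfl

@[simp] theorem alternating_succ (x y : α) (n : ℕ) :
    alternating x y (n + 1) = x :: alternating y x n := rfl

@[simp] theorem length_alternating (x y : α) (n : ℕ) : (alternating x y n).length = n := by
  induction n generalizing x y <;> simp [*]

theorem map_alternating (f : α → β) (x y : α) (n : ℕ) :
    (alternating x y n).map f = alternating (f x) (f y) n := by
  induction n generalizing x y <;> simp [*]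

theorem alternating_two_mul_add (x y : α) (n m : ℕ) :
    alternating x y (2 * n + m) = alternating x y (2 * n) ++ alternating x y m := by
  induction n with
  | zero => simp
  | succ n ih => rw [show 2 * (n + 1) + m = 2 * n + m + 1 + 1 by ring]; simp [ih, Nat.mul_succ]

theorem reverse_alternating_two_mul (x y : α) (n : ℕ) :
    (alternating x y (2 * n)).reverse = alternating y x (2 * n) := by
  induction n with
  | zero => simp
  | succ n ih =>
    rw [Nat.mul_succ, alternating_two_mul_add y x]
    simp [ih]

theorem drop_alternating (x y : α) (n d : ℕ) :
    (alternating x y n).drop d =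
      if Even d then alternating x y (n - d) else alternating y x (n - d) := by
  induction d generalizing x y n with
  | zero => simp
  | succ d ih =>
    rcases n with _ | n
    · split_ifs <;> simp
    · simp only [alternating_succ, drop_succ_cons, ih, Nat.even_add_one, Nat.add_sub_add_right]
      split_ifs <;> rfl

theorem exists_eq_alternating_of_append_eq {x y : α} {L K : ℕ} {u v : List α}
    (h : alternating x y (2 * L) ++ v = u ++ alternating x y (2 * K))
    (hu : u.length ≤ 2 * L) (hv : v.head? ≠ some y) : ∃ e, v = alternating x y (2 * e) := by
  have hdrop := congrArg (drop (2 * L)) h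
  rw [drop_left' (length_alternating _ _ _), drop_append, drop_eq_nil_of_le hu, nil_append,
    drop_alternating] at hdrop
  split_ifs at hdrop with hd
  · obtain ⟨s, hs⟩ := hd
    exact ⟨K - s, by rw [hdrop]; congr 1; omega⟩
  · rcases hn : 2 * K - (2 * L - u.length) with _ | n
    · exact ⟨0, by rw [hdrop, hn]; rfl⟩
    · rw [hdrop, hn] at hv
      exact absurd rfl hv

theorem eq_or_eq_of_alternating_append_eq {x y x' y' : α} {L K : ℕ} {u v : List α}
    (h : alternating x' y' (2 * L) ++ v = u ++ alternating x y (2 * K))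
    (hu : u.length + 2 ≤ 2 * L) (hK : 1 ≤ K) : x' = x ∨ x' = y := by
  have hdrop := congrArg (drop u.length) h
  rw [drop_left, drop_append_of_le_length (by simp; omega), drop_alternating]
    at hdrop
  obtain ⟨n, hn⟩ : ∃ n, 2 * L - u.length = n + 2 := ⟨_, (Nat.sub_add_cancel (by omega)).symm⟩
  obtain ⟨k, rfl⟩ : ∃ k, K = k + 1 := ⟨_, (Nat.sub_add_cancel hK).symm⟩
  rw [hn, Nat.mul_succ] at hdrop
  split_ifs at hdrop <;> simp_all

end List

namespace Monoid.Coprod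

open List

variable {A B : Type*} [Group A] [Group B]

def IsReduced : List (A ⊕ B) → Prop
  | [] => True
  | [.inl x] => x ≠ 1
  | [.inr y] => y ≠ 1
  | .inl x :: .inr y :: t => x ≠ 1 ∧ IsReduced (.inr y :: t)
  | .inr y :: .inl x :: t => y ≠ 1 ∧ IsReduced (.inl x :: t)
  | .inl _ :: .inl _ :: _ => False
  | .inr _ :: .inr _ :: _ => False

theorem IsReduced.of_cons {x : A ⊕ B} {w : List (A ⊕ B)} (h : IsReduced (x :: w)) :
    IsReduced w := by
  rcases x with x | x <;> rcases w with _ | ⟨y | y, t⟩ <;> simp_all [IsReduced]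

open scoped Classical in
noncomputable def mulInl (x : A) : List (A ⊕ B) → List (A ⊕ B)
  | [] => if x = 1 then [] else [.inl x]
  | .inl y :: t => if x * y = 1 then t else .inl (x * y) :: t
  | .inr y :: t => if x = 1 then .inr y :: t else .inl x :: .inr y :: t

open scoped Classical in
noncomputable def mulInr (y : B) : List (A ⊕ B) → List (A ⊕ B)
  | [] => if y = 1 then [] else [.inr y]
  | .inr z :: t => if y * z = 1 then t else .inr (y * z) :: t
  | .inl x :: t => if y = 1 then .inl x :: t else .inr y :: .inl x :: t

theorem IsReduced.mulInl (x : A) {w : List (A ⊕ B)} (h : IsReduced w) :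
    IsReduced (mulInl x w) := by
  rcases w with _ | ⟨y | y, _ | ⟨z | z, t⟩⟩ <;>
    simp only [Coprod.mulInl] <;> split_ifs <;> simp_all [IsReduced]

theorem IsReduced.mulInr (y : B) {w : List (A ⊕ B)} (h : IsReduced w) :
    IsReduced (mulInr y w) := by
  rcases w with _ | ⟨z | z, _ | ⟨x | x, t⟩⟩ <;>
    simp only [Coprod.mulInr] <;> split_ifs <;> simp_all [IsReduced]

theorem mulInl_one {w : List (A ⊕ B)} (h : IsReduced w) : mulInl 1 w = w := by
  rcases w with _ | ⟨y | y, _ | ⟨z | z, t⟩⟩ <;> simp_all [IsReduced, mulInl]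

theorem mulInr_one {w : List (A ⊕ B)} (h : IsReduced w) : mulInr 1 w = w := by
  rcases w with _ | ⟨y | y, _ | ⟨z | z, t⟩⟩ <;> simp_all [IsReduced, mulInr]

theorem mulInl_mul (x x' : A) {w : List (A ⊕ B)} (h : IsReduced w) :
    mulInl (x * x') w = mulInl x (mulInl x' w) := by
  rcases w with _ | ⟨y | y, _ | ⟨z | z, t⟩⟩ <;> simp only [mulInl] <;> split_ifs <;>
    simp_all [IsReduced, mul_assoc]

theorem mulInr_mul (y y' : B) {w : List (A ⊕ B)} (h : IsReduced w) :
    mulInr (y * y') w = mulInr y (mulInr y' w) := by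
  rcases w with _ | ⟨z | z, _ | ⟨x | x, t⟩⟩ <;> simp only [mulInr] <;> split_ifs <;>
    simp_all [IsReduced, mul_assoc]

variable (A B) in
abbrev ReducedWord := {w : List (A ⊕ B) // IsReduced w}

noncomputable def inlAction : A →* Equiv.Perm (ReducedWord A B) where
  toFun x :=
    { toFun w := ⟨mulInl x w, w.2.mulInl x⟩
      invFun w := ⟨mulInl x⁻¹ w, w.2.mulInl _⟩
      left_inv w := Subtype.ext <| by simp [← mulInl_mul _ _ w.2, mulInl_one w.2]
      right_inv w := Subtype.ext <| by simp [← mulInl_mul _ _ w.2, mulInl_one w.2] }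
  map_one' := Equiv.ext fun w => Subtype.ext (mulInl_one w.2)
  map_mul' x y := Equiv.ext fun w => Subtype.ext (mulInl_mul x y w.2)

noncomputable def inrAction : B →* Equiv.Perm (ReducedWord A B) where
  toFun y :=
    { toFun w := ⟨mulInr y w, w.2.mulInr y⟩
      invFun w := ⟨mulInr y⁻¹ w, w.2.mulInr _⟩
      left_inv w := Subtype.ext <| by simp [← mulInr_mul _ _ w.2, mulInr_one w.2]
      right_inv w := Subtype.ext <| by simp [← mulInr_mul _ _ w.2, mulInr_one w.2] }
  map_one' := Equiv.ext fun w => Subtype.ext (mulInr_one w.2)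
  map_mul' x y := Equiv.ext fun w => Subtype.ext (mulInr_mul x y w.2)

noncomputable def wordAction : A ∗ B →* Equiv.Perm (ReducedWord A B) :=
  lift inlAction inrAction

noncomputable def normalForm (g : A ∗ B) : List (A ⊕ B) :=
  (wordAction g ⟨[], trivial⟩).1

theorem isReduced_normalForm (g : A ∗ B) : IsReduced (normalForm g) :=
  (wordAction g ⟨[], trivial⟩).2

@[simp] theorem normalForm_one : normalForm (1 : A ∗ B) = [] := rfl

theorem normalForm_inl_mul (x : A) (g : A ∗ B) :
    normalForm (inl x * g) = mulInl x (normalForm g) := by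
  simp [normalForm, wordAction, inlAction]

theorem normalForm_inr_mul (y : B) (g : A ∗ B) :
    normalForm (inr y * g) = mulInr y (normalForm g) := by
  simp [normalForm, wordAction, inrAction]

def prodWord (w : List (A ⊕ B)) : A ∗ B :=
  (w.map (Sum.elim inl inr)).prod

@[simp] theorem prodWord_nil : prodWord ([] : List (A ⊕ B)) = 1 := rfl

@[simp] theorem prodWord_cons_inl (x : A) (w : List (A ⊕ B)) :
    prodWord (.inl x :: w) = inl x * prodWord w := rfl

@[simp] theorem prodWord_cons_inr (y : B) (w : List (A ⊕ B)) :
    prodWord (.inr y :: w) = inr y * prodWord w := rfl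

theorem prodWord_mulInl (x : A) (w : List (A ⊕ B)) :
    prodWord (mulInl x w) = inl x * prodWord w := by
  rcases w with _ | ⟨y | y, t⟩ <;> simp only [mulInl] <;> split_ifs with h <;>
    simp [← mul_assoc, ← map_mul, h]

theorem prodWord_mulInr (y : B) (w : List (A ⊕ B)) :
    prodWord (mulInr y w) = inr y * prodWord w := by
  rcases w with _ | ⟨x | x, t⟩ <;> simp only [mulInr] <;> split_ifs with h <;>
    simp [← mul_assoc, ← map_mul, h]

theorem prodWord_wordAction (g : A ∗ B) (w : ReducedWord A B) :
    prodWord (wordAction g w).1 = g * prodWord w.1 := by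
  induction g using Coprod.induction_on generalizing w with
  | inl x => simpa [wordAction, inlAction] using prodWord_mulInl x w.1
  | inr y => simpa [wordAction, inrAction] using prodWord_mulInr y w.1
  | mul g h ihg ihh => rw [map_mul, Equiv.Perm.mul_apply, ihg, ihh, mul_assoc]

@[simp] theorem prodWord_normalForm (g : A ∗ B) : prodWord (normalForm g) = g :=
  (prodWord_wordAction g ⟨[], trivial⟩).trans (mul_one g)

theorem normalForm_injective : Function.Injective (normalForm : A ∗ B → List (A ⊕ B)) :=
  Function.LeftInverse.injective prodWord_normalForm

theorem normalForm_prodWord {w : List (A ⊕ B)} (h : IsReduced w) :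
    normalForm (prodWord w) = w := by
  induction w with
  | nil => rfl
  | cons x t ih =>
    rcases x with x | y
    · rw [prodWord_cons_inl, normalForm_inl_mul, ih h.of_cons]
      rcases t with _ | ⟨z | z, t⟩ <;> simp_all [IsReduced, mulInl]
    · rw [prodWord_cons_inr, normalForm_inr_mul, ih h.of_cons]
      rcases t with _ | ⟨z | z, t⟩ <;> simp_all [IsReduced, mulInr]

theorem normalForm_eq_iff {g : A ∗ B} {w : List (A ⊕ B)} (h : IsReduced w) :
    normalForm g = w ↔ g = prodWord w :=
  ⟨fun e => by rw [← e, prodWord_normalForm], fun e => by rw [e, normalForm_prodWord h]⟩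

theorem isReduced_iff {w : List (A ⊕ B)} :
    IsReduced w ↔ (∀ x ∈ w, Sum.elim (· ≠ 1) (· ≠ 1) x) ∧
      w.IsChain (fun x y => x.isLeft ≠ y.isLeft) := by
  induction w with
  | nil => simp [IsReduced]
  | cons x t ih =>
    rcases x with x | x <;> rcases t with _ | ⟨y | y, t⟩ <;> simp_all [IsReduced, and_assoc]

def invWord (w : List (A ⊕ B)) : List (A ⊕ B) :=
  (w.map (Sum.map (·⁻¹) (·⁻¹))).reverse

theorem IsReduced.invWord {w : List (A ⊕ B)} (h : IsReduced w) : IsReduced (invWord w) := by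
  rw [isReduced_iff] at h ⊢
  refine ⟨fun x hx => ?_, ?_⟩
  · simp only [Coprod.invWord, mem_reverse, mem_map] at hx
    obtain ⟨y, hy, rfl⟩ := hx
    rcases y with y | y <;> simpa using h.1 _ hy
  · simpa [Coprod.invWord, isChain_reverse, isChain_map, eq_comm] using h.2

theorem prodWord_invWord (w : List (A ⊕ B)) : prodWord (invWord w) = (prodWord w)⁻¹ := by
  induction w with
  | nil => simp [invWord]
  | cons x t ih => rcases x with x | x <;> simp_all [invWord, prodWord]

theorem normalForm_inv (g : A ∗ B) : normalForm g⁻¹ = invWord (normalForm g) := by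
  rw [normalForm_eq_iff (isReduced_normalForm g).invWord, prodWord_invWord, prodWord_normalForm]

theorem IsReduced.map_swap {w : List (A ⊕ B)} (h : IsReduced w) :
    IsReduced (w.map Sum.swap) := by
  induction w with
  | nil => trivial
  | cons x t ih =>
    rcases x with x | x <;> rcases t with _ | ⟨y | y, t⟩ <;> simp_all [IsReduced]

theorem prodWord_map_swap (w : List (A ⊕ B)) :
    prodWord (w.map Sum.swap) = swap A B (prodWord w) := by
  induction w with
  | nil => simp
  | cons x t ih => rcases x with x | x <;> simp_all

theorem normalForm_swap (g : A ∗ B) :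
    normalForm (swap A B g) = (normalForm g).map Sum.swap := by
  rw [normalForm_eq_iff (isReduced_normalForm g).map_swap, prodWord_map_swap, prodWord_normalForm]

variable {a : A} {b : B}

theorem mulInl_mulInr_of_head_isLeft (ha : a ≠ 1) (hb : b ≠ 1) {w : List (A ⊕ B)}
    (hw : ∀ x ∈ w.head?, x.isLeft) : mulInl a (mulInr b w) = .inl a :: .inr b :: w := by
  rcases w with _ | ⟨x | y, t⟩ <;> simp_all [mulInl, mulInr]

theorem normalForm_pow_mul (ha : a ≠ 1) (hb : b ≠ 1) {g : A ∗ B}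
    (hg : ∀ x ∈ (normalForm g).head?, x.isLeft) (i : ℕ) :
    normalForm ((inl a * inr b) ^ i * g) =
      alternating (Sum.inl a) (Sum.inr b) (2 * i) ++ normalForm g := by
  induction i with
  | zero => simp
  | succ i ih =>
    have hstart : ∀ x ∈ (alternating (Sum.inl a) (Sum.inr b) (2 * i) ++ normalForm g).head?,
        x.isLeft := by
      rcases i with _ | i
      · simpa using hg
      · simp [Nat.mul_succ]
    rw [pow_succ', mul_assoc, mul_assoc, normalForm_inl_mul, normalForm_inr_mul, ih,
      mulInl_mulInr_of_head_isLeft ha hb hstart, Nat.mul_succ]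
    rfl

theorem normalForm_pow (ha : a ≠ 1) (hb : b ≠ 1) (i : ℕ) :
    normalForm ((inl a * inr b) ^ i) = alternating (Sum.inl a) (Sum.inr b) (2 * i) := by
  simpa using normalForm_pow_mul ha hb (g := 1) (by simp) i

theorem not_isOfFinOrder_inl_mul_inr (ha : a ≠ 1) (hb : b ≠ 1) :
    ¬IsOfFinOrder (inl a * inr b) := by
  rw [isOfFinOrder_iff_pow_eq_one]
  rintro ⟨i, hi, h⟩
  have := congrArg List.length (normalForm_pow ha hb i)
  rw [h, normalForm_one] at this
  simp at this
  omega

theorem exists_pow_mul_head_isLeft (ha : a ≠ 1) (g : A ∗ B) :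
    ∃ j : ℕ, ∀ x ∈ (normalForm ((inl a * inr b) ^ j * g)).head?, x.isLeft := by
  induction hn : (normalForm g).length using Nat.strong_induction_on generalizing g with
  | _ n ih =>
  have hred := isReduced_normalForm g
  have hcg : normalForm (inl a * inr b * g) = mulInl a (mulInr b (normalForm g)) := by
    rw [mul_assoc, normalForm_inl_mul, normalForm_inr_mul]
  rcases hg : normalForm g with _ | ⟨x | y, t⟩
  · exact ⟨0, by simp [hg]⟩
  · exact ⟨0, by simp [hg]⟩
  rw [hg] at hred hcg
  by_cases hby : b * y = 1
  · rcases t with _ | ⟨z | z, t⟩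
    · exact ⟨1, by simp [hcg, mulInr, mulInl, hby, ha]⟩
    · by_cases haz : a * z = 1
      · obtain ⟨j, hj⟩ := ih t.length (by simp [← hn, hg]) (inl a * inr b * g)
          (by simp [hcg, mulInr, mulInl, hby, haz])
        exact ⟨j + 1, by rwa [pow_succ, mul_assoc]⟩
      · exact ⟨1, by simp [hcg, mulInr, mulInl, hby, haz]⟩
    · simp [IsReduced] at hred
  · exact ⟨1, by simp [hcg, mulInr, mulInl, hby, ha]⟩

theorem exists_normalForm_inv_pow_mul (ha : a ≠ 1) (hb : b ≠ 1) (g : A ∗ B) :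
    ∃ (j : ℕ) (v : List (A ⊕ B)), ∀ i, normalForm ((inl a * inr b)⁻¹ ^ (j + i) * g) =
      alternating (Sum.inr b⁻¹) (Sum.inl a⁻¹) (2 * i) ++ v := by
  obtain ⟨j, hj⟩ := exists_pow_mul_head_isLeft (inv_ne_one.2 hb) (swap A B g)
  refine ⟨j, (normalForm ((inl b⁻¹ * inr a⁻¹) ^ j * swap A B g)).map Sum.swap, fun i => ?_⟩
  have hswap : swap A B ((inl a * inr b)⁻¹ ^ (j + i) * g) =
      (inl b⁻¹ * inr a⁻¹) ^ i * ((inl b⁻¹ * inr a⁻¹) ^ j * swap A B g) := by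
    simp [add_comm j i, pow_add, mul_assoc]
  rw [← swap_swap ((inl a * inr b)⁻¹ ^ (j + i) * g), normalForm_swap, hswap,
    normalForm_pow_mul (inv_ne_one.2 hb) (inv_ne_one.2 ha) hj, map_append, map_alternating]
  rfl

theorem exists_normalForm_mul_pow (ha : a ≠ 1) (hb : b ≠ 1) (g : A ∗ B) :
    ∃ (j : ℕ) (u : List (A ⊕ B)), ∀ i, normalForm (g * (inl a * inr b) ^ (j + i)) =
      u ++ alternating (Sum.inl a) (Sum.inr b) (2 * i) := by
  obtain ⟨j, v, hv⟩ := exists_normalForm_inv_pow_mul ha hb g⁻¹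
  refine ⟨j, invWord v, fun i => ?_⟩
  rw [← inv_inv (g * _), mul_inv_rev, ← inv_pow, normalForm_inv, hv]
  simp [invWord, map_alternating, reverse_alternating_two_mul]

theorem mem_zpowers_of_mul_pow_eq_pow_mul (ha : a ≠ 1) (hb : b ≠ 1) {g : A ∗ B} {k l : ℕ}
    (hk : 0 < k) (hl : 0 < l) (h : g * (inl a * inr b) ^ k = (inl a * inr b) ^ l * g) :
    g ∈ Subgroup.zpowers (inl a * inr b) := by
  obtain ⟨j₀, hj₀⟩ := exists_pow_mul_head_isLeft ha g
  obtain ⟨j₁, u, hu⟩ := exists_normalForm_mul_pow ha hb g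
  set c := inl a * inr b
  set N := j₀ + j₁ + u.length + 1 with hN
  have hkN : N ≤ k * N := Nat.le_mul_of_pos_left N hk
  have hlN : N ≤ l * N := Nat.le_mul_of_pos_left N hl
  have hconj : g * c ^ (k * N) = c ^ (l * N) * g := by
    simpa only [pow_mul] using (SemiconjBy.pow_right h N).eq
  have hleft : normalForm (c ^ (l * N) * g) =
      alternating (Sum.inl a) (Sum.inr b) (2 * (l * N - j₀)) ++ normalForm (c ^ j₀ * g) := by
    rw [← normalForm_pow_mul ha hb hj₀, ← mul_assoc, ← pow_add, Nat.sub_add_cancel (by omega)]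
  have hright := hu (k * N - j₁)
  rw [Nat.add_sub_cancel' (by omega), hconj, hleft] at hright
  obtain ⟨e, he⟩ := exists_eq_alternating_of_append_eq hright (by omega)
    (fun h' => by simp [h'] at hj₀)
  have hpow : c ^ j₀ * g = c ^ e :=
    normalForm_injective (he.trans (normalForm_pow ha hb e).symm)
  rw [eq_inv_mul_of_mul_eq hpow]
  exact mul_mem (inv_mem (Subgroup.npow_mem_zpowers c j₀)) (Subgroup.npow_mem_zpowers c e)

theorem mul_pow_ne_inv_pow_mul (ha : a ≠ 1) (hb : b ≠ 1) (hb2 : b * b ≠ 1) (g : A ∗ B)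
    {k l : ℕ} (hk : 0 < k) (hl : 0 < l) :
    g * (inl a * inr b) ^ k ≠ (inl a * inr b)⁻¹ ^ l * g := by
  intro h
  obtain ⟨j₁, u, hu⟩ := exists_normalForm_mul_pow ha hb g
  obtain ⟨j₂, v, hv⟩ := exists_normalForm_inv_pow_mul ha hb g
  set c := inl a * inr b
  set N := j₁ + j₂ + u.length + 2 with hN
  have hkN : N ≤ k * N := Nat.le_mul_of_pos_left N hk
  have hlN : N ≤ l * N := Nat.le_mul_of_pos_left N hl
  have hconj : g * c ^ (k * N) = c⁻¹ ^ (l * N) * g := by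
    simpa only [pow_mul] using (SemiconjBy.pow_right h N).eq
  have hright := hu (k * N - j₁)
  rw [Nat.add_sub_cancel' (by omega), hconj, show l * N = j₂ + (l * N - j₂) by omega,
    hv] at hright
  rcases eq_or_eq_of_alternating_append_eq hright (by omega) (by omega) with h' | h'
  · simp at h'
  · exact hb2 (mul_eq_one_iff_eq_inv.2 (Sum.inr_injective h').symm)

theorem mem_zpowers_of_semiconjBy (ha : a ≠ 1) (hb : b ≠ 1) (hb2 : b * b ≠ 1) {g : A ∗ B}
    {k l : ℤ} (hk : k ≠ 0) (h : SemiconjBy g ((inl a * inr b) ^ k) ((inl a * inr b) ^ l)) :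
    g ∈ Subgroup.zpowers (inl a * inr b) := by
  wlog hk' : 0 < k generalizing k l
  · exact this (l := -l) (neg_ne_zero.2 hk) (by simpa only [zpow_neg] using h.inv_right)
      (by omega)
  lift k to ℕ using hk'.le
  have hl : l ≠ 0 := by
    rintro rfl
    refine not_isOfFinOrder_inl_mul_inr ha hb (isOfFinOrder_iff_zpow_eq_one.2 ⟨k, hk, ?_⟩)
    simpa using h.eq
  obtain ⟨m, rfl | rfl⟩ := Int.eq_nat_or_neg l
  · exact mem_zpowers_of_mul_pow_eq_pow_mul ha hb (k := k) (l := m) (by omega) (by omega)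
      (by simpa using h.eq)
  · exact absurd (by simpa only [zpow_neg, zpow_natCast, inv_pow] using h.eq)
      (mul_pow_ne_inv_pow_mul ha hb hb2 g (k := k) (l := m) (by omega) (by omega))

end Monoid.Coprod

theorem stmt5_general (n m : ℕ) (hn : 2 ≤ n) (hm3 : 3 ≤ m) :
    let Γ := Monoid.Coprod (Multiplicative (ZMod n)) (Multiplicative (ZMod m))
    let a : Γ := Monoid.Coprod.inl (Multiplicative.ofAdd (1 : ZMod n))
    let b : Γ := Monoid.Coprod.inr (Multiplicative.ofAdd (1 : ZMod m))
    ¬ IsOfFinOrder (a * b) ∧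
    ∀ g : Γ, g ∉ Subgroup.zpowers (a * b) →
      ∀ h ∈ Subgroup.zpowers (a * b), g * h * g⁻¹ ∈ Subgroup.zpowers (a * b) → h = 1 := by
  intro Γ a b
  have : Fact (1 < n) := ⟨by omega⟩
  have : Fact (1 < m) := ⟨by omega⟩
  have ha : Multiplicative.ofAdd (1 : ZMod n) ≠ 1 := by simp
  have hb : Multiplicative.ofAdd (1 : ZMod m) ≠ 1 := by simp
  have hb2 : Multiplicative.ofAdd (1 : ZMod m) * Multiplicative.ofAdd 1 ≠ 1 := by
    rw [← ofAdd_add, Ne, ofAdd_eq_one, one_add_one_eq_two, ← Nat.cast_ofNat,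
      ZMod.natCast_eq_zero_iff]
    exact fun h => absurd (Nat.le_of_dvd two_pos h) (by omega)
  refine ⟨Monoid.Coprod.not_isOfFinOrder_inl_mul_inr ha hb, fun g hg h hh hconj => ?_⟩
  obtain ⟨k, rfl⟩ := Subgroup.mem_zpowers_iff.1 hh
  obtain ⟨l, hl⟩ := Subgroup.mem_zpowers_iff.1 hconj
  by_contra hk
  exact hg (Monoid.Coprod.mem_zpowers_of_semiconjBy ha hb hb2
    (fun h0 => hk (by rw [h0, zpow_zero])) (mul_inv_eq_iff_eq_mul.1 hl.symm))

/-- In the free product `Γ = (ℤ/nℤ) ∗ (ℤ/mℤ)` (with `n ≥ 2`, `m ≥ 3` prime), the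
element `ab` (product of the canonical generators) has infinite order and the cyclic
subgroup `⟨ab⟩` is malnormal in `Γ`. -/
theorem stmt5 (n m : ℕ) (hn : 2 ≤ n) (hm : Nat.Prime m) (hm3 : 3 ≤ m) :
    let Γ := Monoid.Coprod (Multiplicative (ZMod n)) (Multiplicative (ZMod m))
    let a : Γ := Monoid.Coprod.inl (Multiplicative.ofAdd (1 : ZMod n))
    let b : Γ := Monoid.Coprod.inr (Multiplicative.ofAdd (1 : ZMod m))
    ¬ IsOfFinOrder (a * b) ∧
    ∀ g : Γ, g ∉ Subgroup.zpowers (a * b) →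
      ∀ h ∈ Subgroup.zpowers (a * b), g * h * g⁻¹ ∈ Subgroup.zpowers (a * b) → h = 1 :=
  stmt5_general n m hn hm3
end

section
/- Let Γ be a group and Γ₀ ≤ Γ a subgroup of infinite index. Then for every finite subset F of the coset space Γ/Γ₀ there exists g ∈ Γ such that (g • F) ∩ F = ∅, where g acts on Γ/Γ₀ by left translation. -/
/-!
If every `g` moved some point of the finite set `F` back into `F`, the group would be covered by
the finitely many sets `{g | g • x = y}` with `x, y ∈ F`. Each nonempty one is a left coset of the
stabilizer of `x`, which has infinite index because the orbit of `x` is infinite; this contradicts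
B. H. Neumann's theorem that a group is not a finite union of cosets of infinite-index subgroups.
-/

open scoped Pointwise

namespace MulAction

variable {G X : Type*} [Group G] [MulAction G X]

theorem not_finiteIndex_stabilizer {x : X} (hx : (orbit G x).Infinite) :
    ¬ (stabilizer G x).FiniteIndex := by
  rw [Subgroup.not_finiteIndex_iff, index_stabilizer]
  exact hx.ncard

theorem mem_smul_stabilizer_iff {a g : G} {x : X} :
    g ∈ a • (stabilizer G x : Set G) ↔ g • x = a • x := by
  rw [mem_leftCoset_iff, SetLike.mem_coe, mem_stabilizer_iff, mul_smul, inv_smul_eq_iff]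

theorem exists_smul_finset_disjoint (F : Finset X) (hF : ∀ x ∈ F, (orbit G x).Infinite) :
    ∃ g : G, ∀ x ∈ F, g • x ∉ F := by
  classical
  by_contra! hcon
  have htransport (p : X × X) : ∃ a : G, p.2 ∈ orbit G p.1 → a • p.1 = p.2 := by
    by_cases hp : p.2 ∈ orbit G p.1
    · obtain ⟨a, ha⟩ := hp
      exact ⟨a, fun _ => ha⟩
    · exact ⟨1, fun h => absurd h hp⟩
  choose a ha using htransport
  let s := (F ×ˢ F).filter fun p => p.2 ∈ orbit G p.1
  have hcovers : ⋃ p ∈ s, a p • (stabilizer G p.1 : Set G) = Set.univ := by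
    refine Set.eq_univ_of_forall fun g => ?_
    obtain ⟨x, hx, hgx⟩ := hcon g
    have hp : (x, g • x) ∈ s := Finset.mem_filter.mpr ⟨Finset.mk_mem_product hx hgx, mem_orbit x g⟩
    refine Set.mem_biUnion hp (mem_smul_stabilizer_iff.mpr ?_)
    exact (ha (x, g • x) (mem_orbit x g)).symm
  obtain ⟨p, hp, hfi⟩ := Subgroup.exists_finiteIndex_of_leftCoset_cover hcovers
  have hp₁ : p.1 ∈ F := (Finset.mem_product.mp (Finset.mem_filter.mp hp).1).1
  exact not_finiteIndex_stabilizer (hF p.1 hp₁) hfi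

end MulAction

/-- If `Γ₀` has infinite index in `Γ`, then for every finite subset `F` of `Γ/Γ₀`
there is `g ∈ Γ` with `(g • F) ∩ F = ∅`. -/
theorem stmt6 {Γ : Type*} [Group Γ] (Γ₀ : Subgroup Γ) [Infinite (Γ ⧸ Γ₀)]
    (F : Finset (Γ ⧸ Γ₀)) :
    ∃ g : Γ, ∀ x ∈ F, g • x ∉ F :=
  MulAction.exists_smul_finset_disjoint F fun x _ => by
    rw [MulAction.orbit_eq_univ]
    exact Set.infinite_univ
end

section
/- For a group Λ, the following are equivalent: (1) the FC-radical of Λ is torsion-free, i.e., every element of Λ that has a finite conjugacy class and finite order is the identity; (2) whenever K ≤ Λ is a finite subgroup and H ≤ Λ is a subgroup of finite index with K ≤ H and K normal in H, then K = {e}. -/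
/-!
An element with finitely many conjugates has a centralizer of finite index. So a torsion element
`x` of the FC-radical generates a finite subgroup that is normal in the finite-index subgroup
`centralizer {x}`. Conversely, an element of a finite `K` normalized by a finite-index `H` has at
most `[Λ : H] * |K|` conjugates, and finite order.
-/

section

open Subgroup

variable {G : Type*} [Group G]

theorem Set.Finite.setOf_isConj_of_conj_mem {S : Set G} (hS : S.Finite) {H : Subgroup G}
    [H.FiniteIndex] (hSH : ∀ h ∈ H, ∀ s ∈ S, h * s * h⁻¹ ∈ S) {x : G} (hx : x ∈ S) :
    {y | IsConj x y}.Finite := by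
  refine (Set.finite_iUnion fun q : G ⧸ H => hS.image fun s => q.out * s * q.out⁻¹).subset ?_
  intro y hy
  obtain ⟨g, rfl⟩ := isConj_iff.mp hy
  have hg : (g : G ⧸ H).out⁻¹ * g ∈ H :=
    QuotientGroup.eq.mp (QuotientGroup.out_eq' (g : G ⧸ H))
  refine Set.mem_iUnion.mpr ⟨g, _, hSH _ hg x hx, ?_⟩
  group

theorem Subgroup.finiteIndex_centralizer_of_finite_setOf_isConj {x : G}
    (hx : {y | IsConj x y}.Finite) : (centralizer {x}).FiniteIndex := by
  have : Finite (MulAction.orbit (ConjAct G) x) := by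
    refine (hx.subset fun y hy => ?_).to_subtype
    exact (ConjAct.mem_orbit_conjAct.mp hy).symm
  have : Finite (G ⧸ centralizer {x}) := .of_equiv _
    ((MulAction.orbitEquivQuotientStabilizer (ConjAct G) x).trans
      (quotientEquivOfEq (ConjAct.stabilizer_eq_centralizer x)))
  exact finiteIndex_of_finite_quotient

theorem Subgroup.zpowers_le_centralizer_singleton (x : G) : zpowers x ≤ centralizer {x} :=
  zpowers_le.mpr (mem_centralizer_singleton_iff.mpr rfl)

theorem Subgroup.conj_mem_zpowers_of_mem_centralizer {x h k : G} (hh : h ∈ centralizer {x})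
    (hk : k ∈ zpowers x) : h * k * h⁻¹ ∈ zpowers x := by
  obtain ⟨n, rfl⟩ := hk
  have hc : Commute h x := mem_centralizer_singleton_iff.mp hh
  rw [(hc.zpow_right n).eq, mul_inv_cancel_right]
  exact zpow_mem_zpowers x n

theorem Subgroup.isOfFinOrder_of_mem_of_finite {K : Subgroup G} (hK : (K : Set G).Finite) {k : G}
    (hk : k ∈ K) : IsOfFinOrder k :=
  have : Finite K := hK.to_subtype
  Submonoid.isOfFinOrder_coe.mpr (isOfFinOrder_of_finite (⟨k, hk⟩ : K))

end

/-- For a group `Λ`, the FC-radical of `Λ` is torsion free if and only if the only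
finite subgroup `K ≤ Λ` that is normal in some finite-index subgroup `H ≤ Λ` is the
trivial subgroup. -/
theorem stmt7 {Λ : Type*} [Group Λ] :
    (∀ x : Λ, ({y : Λ | IsConj x y}).Finite → IsOfFinOrder x → x = 1) ↔
    (∀ K H : Subgroup Λ, (K : Set Λ).Finite → H.index ≠ 0 → K ≤ H →
      (∀ h ∈ H, ∀ k ∈ K, h * k * h⁻¹ ∈ K) → K = ⊥) := by
  constructor
  · intro hFC K H hK hH _ hKnorm
    have : H.FiniteIndex := ⟨hH⟩
    refine eq_bot_iff.mpr fun k hk => Subgroup.mem_bot.mpr ?_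
    exact hFC k (hK.setOf_isConj_of_conj_mem hKnorm hk) (Subgroup.isOfFinOrder_of_mem_of_finite hK hk)
  · intro hTrivial x hx hord
    have := Subgroup.finiteIndex_centralizer_of_finite_setOf_isConj hx
    refine Subgroup.zpowers_eq_bot.mp (hTrivial _ _ hord.finite_zpowers this.index_ne_zero
      (Subgroup.zpowers_le_centralizer_singleton x) fun _ hh _ hk => ?_)
    exact Subgroup.conj_mem_zpowers_of_mem_centralizer hh hk
end

section
/- Let (Z,η) be a probability space, S : Z → Z an ergodic measure-preserving transformation, H a separable complex Hilbert space, and U a unitary operator on H such that ⟨Uⁿx, y⟩ → 0 as n → ∞ for all x, y ∈ H. If F : Z → H is a strongly measurable function satisfying F(S z) = U(F(z)) for almost every z ∈ Z, then F(z) = 0 for almost every z ∈ Z. -/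
/-!
By Poincaré recurrence, for almost every `z` the values `F (Sⁿ z)` come back arbitrarily close
to `F z` infinitely often; since `F` has separable range, countably many balls suffice to make
this an almost-everywhere statement. As `F (Sⁿ z) = Uⁿ (F z)` for all `n` almost surely, `F z`
is a cluster point of `n ↦ Uⁿ (F z)`, and passing to the limit in `⟪Uⁿ (F z), F z⟫ → 0` along
it gives `‖F z‖² = 0`.
-/

open MeasureTheory Filter Topology

theorem MeasureTheory.Measure.QuasiMeasurePreserving.ae_forall_comp_iterate_eq
    {α β : Type*} [MeasurableSpace α] {μ : Measure α} {f : α → α}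
    (hf : Measure.QuasiMeasurePreserving f μ μ) {g : α → β} {T : β → β}
    (h : ∀ᵐ x ∂μ, g (f x) = T (g x)) : ∀ᵐ x ∂μ, ∀ n, g (f^[n] x) = T^[n] (g x) := by
  refine ae_all_iff.2 fun n => ?_
  induction n with
  | zero => exact ae_of_all _ fun x => rfl
  | succ n ih =>
    filter_upwards [hf.ae ih, h] with x hn h1
    rw [Function.iterate_succ_apply, hn, h1, Function.iterate_succ_apply]

theorem MeasureTheory.Conservative.ae_mapClusterPt_comp_iterate
    {α E : Type*} [MeasurableSpace α] {μ : Measure α} {f : α → α} (hf : Conservative f μ)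
    [PseudoMetricSpace E] {g : α → E} (hg : StronglyMeasurable g) :
    ∀ᵐ x ∂μ, MapClusterPt (g x) atTop fun n => g (f^[n] x) := by
  obtain ⟨c, hc, hgc⟩ := hg.isSeparable_range
  have hball : ∀ y ∈ c, ∀ k : ℕ, ∀ᵐ x ∂μ, dist (g x) y < 1 / (k + 1) →
      ∃ᶠ n in atTop, dist (g (f^[n] x)) y < 1 / (k + 1) := fun y _ k =>
    hf.ae_mem_imp_frequently_image_mem (s := {x | dist (g x) y < 1 / (k + 1)})
      ((hg.dist stronglyMeasurable_const).measurable measurableSet_Iio).nullMeasurableSet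
  filter_upwards [(ae_ball_iff hc).2 fun y hy => ae_all_iff.2 (hball y hy)] with x hx
  refine (Metric.nhds_basis_ball.mapClusterPt_iff_frequently).2 fun ε hε => ?_
  obtain ⟨k, hk⟩ := exists_nat_one_div_lt (half_pos hε)
  obtain ⟨y, hyc, hy⟩ :=
    Metric.mem_closure_iff.1 (hgc ⟨x, rfl⟩) _ (Nat.one_div_pos_of_nat (n := k))
  refine (hx y hyc k hy).mono fun n hn => ?_
  calc dist (g (f^[n] x)) (g x) ≤ dist (g (f^[n] x)) y + dist (g x) y := dist_triangle_right _ _ _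
    _ < ε := by linarith

theorem eq_zero_of_mapClusterPt_of_tendsto_inner_zero {𝕜 E ι : Type*} [RCLike 𝕜]
    [NormedAddCommGroup E] [InnerProductSpace 𝕜 E] {l : Filter ι} {u : ι → E} {x : E}
    (hu : Tendsto (fun i => inner 𝕜 (u i) x) l (𝓝 0)) (hx : MapClusterPt x l u) : x = 0 := by
  have hself : MapClusterPt (inner 𝕜 x x) l fun i => inner 𝕜 (u i) x :=
    hx.tendsto_comp ((continuous_id.inner continuous_const).tendsto x)
  exact inner_self_eq_zero.1 (eq_of_nhds_neBot (hself.clusterPt.mono hu))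

theorem stmt8_general {Z : Type*} [MeasurableSpace Z] (η : Measure Z) [IsProbabilityMeasure η]
    (S : Z → Z) (hS : Ergodic S η)
    {H : Type*} [NormedAddCommGroup H] [InnerProductSpace ℂ H]
    (U : H →L[ℂ] H)
    (hmix : ∀ x y : H, Tendsto (fun n : ℕ => (inner ℂ ((U ^ n) x) y : ℂ)) atTop (𝓝 0))
    (F : Z → H) (hF : StronglyMeasurable F)
    (hFeq : ∀ᵐ z ∂η, F (S z) = U (F z)) :
    ∀ᵐ z ∂η, F z = 0 := by
  have hrec := hS.toMeasurePreserving.conservative.ae_mapClusterPt_comp_iterate hF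
  have horbit := hS.quasiMeasurePreserving.ae_forall_comp_iterate_eq hFeq
  filter_upwards [hrec, horbit] with z hz hzorbit
  refine eq_zero_of_mapClusterPt_of_tendsto_inner_zero (hmix (F z) (F z)) ?_
  simpa only [hzorbit, FunLike.coe_pow_eq_iterate] using hz

/-- Let `S` be an ergodic measure-preserving transformation of a probability space
`(Z, η)`, `H` a separable complex Hilbert space, `U` a unitary on `H` that is mixing
(`⟨Uⁿ x, y⟩ → 0` for all `x, y`). If `F : Z → H` is strongly measurable with
`F(Sz) = U(F z)` a.e., then `F = 0` a.e. -/
theorem stmt8 {Z : Type*} [MeasurableSpace Z] (η : Measure Z) [IsProbabilityMeasure η]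
    (S : Z → Z) (hS : Ergodic S η)
    {H : Type*} [NormedAddCommGroup H] [InnerProductSpace ℂ H] [CompleteSpace H]
    [TopologicalSpace.SeparableSpace H]
    (U : H →L[ℂ] H) (hU : U ∈ unitary (H →L[ℂ] H))
    (hmix : ∀ x y : H, Tendsto (fun n : ℕ => (inner ℂ ((U ^ n) x) y : ℂ)) atTop (𝓝 0))
    (F : Z → H) (hF : StronglyMeasurable F)
    (hFeq : ∀ᵐ z ∂η, F (S z) = U (F z)) :
    ∀ᵐ z ∂η, F z = 0 :=
  stmt8_general η S hS U hmix F hF hFeq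
end

section
/- Let G be a group acting on a countable set S, let (H_s)_{s∈S} be a family of complex Hilbert spaces, and let H = ⊕_{s∈S} H_s be their Hilbert direct sum. Let ρ be a unitary representation of G on H such that for every g ∈ G and s ∈ S, ρ_g maps the summand H_s onto the summand H_{g•s}. Suppose (ξ_n) is a sequence of unit vectors in H with ‖ρ_g(ξ_n) − ξ_n‖ → 0 as n → ∞, for every g ∈ G. Define p_n : S → [0,∞) by p_n(s) = ‖P_s(ξ_n)‖², where P_s is the orthogonal projection of H onto H_s. Then each p_n satisfies Σ_{s∈S} p_n(s) = 1, and for every g ∈ G one has Σ_{s∈S} | p_n(g⁻¹ • s) − p_n(s) | → 0 as n → ∞. -/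
open Filter Topology
open scoped ENNReal

/-! Since `ρ g` maps `H_s` isometrically into `H_{g • s}`, expanding `ξ = ∑ₛ ξ_s` shows
`‖(ρ g ξ) s‖ = ‖ξ (g⁻¹ • s)‖`, so `p_n (g⁻¹ • s) = ‖(ρ g ξ_n) s‖²`. The pointwise bound
`|‖a‖² - ‖b‖²| ≤ (‖a‖ + ‖b‖) ‖a - b‖` and Cauchy–Schwarz in `ℓ²` then give
`∑ₛ |p_n (g⁻¹ • s) - p_n s| ≤ 2 ‖ρ g ξ_n - ξ_n‖ → 0`. -/

lemma abs_norm_sq_sub_norm_sq_le {F : Type*} [SeminormedAddCommGroup F] (a b : F) :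
    |‖a‖ ^ 2 - ‖b‖ ^ 2| ≤ (‖a‖ + ‖b‖) * ‖a - b‖ := by
  rw [sq_sub_sq, abs_mul, abs_of_nonneg (by positivity)]
  gcongr
  exact abs_norm_sub_norm_le a b

namespace lp

variable {ι : Type*} {E : ι → Type*} [∀ i, NormedAddCommGroup (E i)]

lemma hasSum_norm_sq (f : lp E 2) : HasSum (fun i => ‖f i‖ ^ 2) (‖f‖ ^ 2) := by
  simpa [Real.rpow_two] using lp.hasSum_norm (by norm_num : 0 < (2 : ℝ≥0∞).toReal) f

lemma tsum_abs_norm_sq_sub_norm_sq_le (f g : lp E 2) :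
    ∑' i, |‖f i‖ ^ 2 - ‖g i‖ ^ 2| ≤ (‖f‖ + ‖g‖) * ‖f - g‖ := by
  have hpq : (2 : ℝ≥0∞).toReal.HolderConjugate (2 : ℝ≥0∞).toReal := by
    simpa using Real.HolderConjugate.two_two
  obtain ⟨hf, hf_le⟩ := lp.tsum_mul_le_mul_norm hpq f (f - g)
  obtain ⟨hg, hg_le⟩ := lp.tsum_mul_le_mul_norm hpq g (f - g)
  have hle : ∀ i, |‖f i‖ ^ 2 - ‖g i‖ ^ 2| ≤ ‖f i‖ * ‖(f - g) i‖ + ‖g i‖ * ‖(f - g) i‖ :=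
    fun i => by simpa [add_mul] using abs_norm_sq_sub_norm_sq_le (f i) (g i)
  calc ∑' i, |‖f i‖ ^ 2 - ‖g i‖ ^ 2|
      ≤ ∑' i, (‖f i‖ * ‖(f - g) i‖ + ‖g i‖ * ‖(f - g) i‖) :=
        (hf.add hg).of_nonneg_of_le (fun i => abs_nonneg _) hle |>.tsum_le_tsum hle (hf.add hg)
    _ = ∑' i, ‖f i‖ * ‖(f - g) i‖ + ∑' i, ‖g i‖ * ‖(f - g) i‖ := hf.tsum_add hg
    _ ≤ ‖f‖ * ‖f - g‖ + ‖g‖ * ‖f - g‖ := add_le_add hf_le hg_le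
    _ = (‖f‖ + ‖g‖) * ‖f - g‖ := by ring

variable {p : ℝ≥0∞} [DecidableEq ι]

lemma eq_single_of_apply_eq_zero {f : lp E p} {i : ι} (hf : ∀ j ≠ i, f j = 0) :
    f = lp.single p i (f i) := by
  ext j
  rcases eq_or_ne j i with rfl | hj
  · rw [lp.single_apply_self]
  · rw [lp.single_apply_ne p i _ hj, hf j hj]

lemma norm_apply_eq_norm_of_apply_eq_zero (hp : 0 < p) {f : lp E p} {i : ι}
    (hf : ∀ j ≠ i, f j = 0) : ‖f i‖ = ‖f‖ := by
  conv_rhs => rw [eq_single_of_apply_eq_zero hf]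
  exact (lp.norm_single hp i (f i)).symm

variable [Fact (1 ≤ p)] {𝕜 : Type*} [NormedField 𝕜] [∀ i, NormedSpace 𝕜 (E i)]

theorem norm_apply_of_map_single (hp : p ≠ ⊤) (T : lp E p →ₗᵢ[𝕜] lp E p) (σ : ι ≃ ι)
    (hT : ∀ i (a : E i), ∀ j ≠ σ i, T (lp.single p i a) j = 0) (f : lp E p) (j : ι) :
    ‖T f j‖ = ‖f (σ.symm j)‖ := by
  obtain ⟨i, rfl⟩ := σ.surjective j
  have hsum : HasSum (fun k => T (lp.single p k (f k)) (σ i)) (T f (σ i)) :=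
    ((lp.hasSum_single hp f).mapL T.toContinuousLinearMap).mapL (lp.evalCLM 𝕜 E p (σ i))
  have hzero : ∀ k ≠ i, T (lp.single p k (f k)) (σ i) = 0 :=
    fun k hk => hT k _ _ (σ.injective.ne hk.symm)
  have hp₀ : 0 < p := zero_lt_one.trans_le Fact.out
  rw [hsum.unique (hasSum_single i hzero), norm_apply_eq_norm_of_apply_eq_zero hp₀ (hT i _),
    T.norm_map, lp.norm_single hp₀, σ.symm_apply_apply]

end lp

theorem stmt12_general {G S : Type*} [Group G] [MulAction G S]
    (H : S → Type*) [∀ s, NormedAddCommGroup (H s)] [∀ s, InnerProductSpace ℂ (H s)]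
    (ρ : G →* (lp H 2 ≃ₗᵢ[ℂ] lp H 2))
    (hρ : ∀ (g : G) (s : S),
      ⇑(ρ g) '' {ξ : lp H 2 | ∀ t, t ≠ s → ξ t = 0}
        = {ξ : lp H 2 | ∀ t, t ≠ g • s → ξ t = 0})
    (ξ : ℕ → lp H 2) (hξ : ∀ n, ‖ξ n‖ = 1)
    (hconv : ∀ g : G, Tendsto (fun n => ‖ρ g (ξ n) - ξ n‖) atTop (𝓝 0)) :
    (∀ n, HasSum (fun s => ‖(ξ n) s‖ ^ 2) 1) ∧
    (∀ g : G, Tendsto (fun n => ∑' s, |‖(ξ n) (g⁻¹ • s)‖ ^ 2 - ‖(ξ n) s‖ ^ 2|)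
      atTop (𝓝 0)) := by
  classical
  have hsingle : ∀ (g : G) (s : S) (a : H s), ∀ t ≠ g • s, ρ g (lp.single 2 s a) t = 0 := by
    intro g s a
    have hmem : ρ g (lp.single 2 s a) ∈ {ζ : lp H 2 | ∀ t, t ≠ g • s → ζ t = 0} :=
      hρ g s ▸ Set.mem_image_of_mem _ fun t ht => lp.single_apply_ne 2 s a ht
    exact hmem
  have hnorm : ∀ g n s, ‖ξ n (g⁻¹ • s)‖ = ‖ρ g (ξ n) s‖ := fun g n s =>
    (lp.norm_apply_of_map_single (by simp) (ρ g).toLinearIsometry (MulAction.toPerm g)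
      (hsingle g) (ξ n) s).symm
  refine ⟨fun n => by simpa [hξ n] using lp.hasSum_norm_sq (ξ n), fun g => ?_⟩
  have hbound : ∀ n, ∑' s, |‖ξ n (g⁻¹ • s)‖ ^ 2 - ‖ξ n s‖ ^ 2| ≤ 2 * ‖ρ g (ξ n) - ξ n‖ := by
    intro n
    simp only [hnorm]
    convert lp.tsum_abs_norm_sq_sub_norm_sq_le (ρ g (ξ n)) (ξ n) using 2
    rw [LinearIsometryEquiv.norm_map, hξ n, one_add_one_eq_two]
  exact squeeze_zero (fun n => tsum_nonneg fun s => abs_nonneg _) hbound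
    (by simpa using (hconv g).const_mul 2)

/-- Let `G` act on a countable set `S` and let `ρ` be a unitary representation of `G` on
the Hilbert direct sum `H = ⊕_{s ∈ S} H_s` permuting the summands accordingly
(`ρ_g (H_s) = H_{g • s}`). If `(ξ_n)` is a sequence of unit vectors with
`‖ρ_g ξ_n − ξ_n‖ → 0` for all `g`, then the probability densities
`p_n(s) = ‖P_s ξ_n‖²` on `S` are asymptotically `G`-invariant in `ℓ¹`. -/
theorem stmt12 {G S : Type*} [Group G] [Countable S] [MulAction G S]
    (H : S → Type*) [∀ s, NormedAddCommGroup (H s)] [∀ s, InnerProductSpace ℂ (H s)]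
    (ρ : G →* (lp H 2 ≃ₗᵢ[ℂ] lp H 2))
    (hρ : ∀ (g : G) (s : S),
      ⇑(ρ g) '' {ξ : lp H 2 | ∀ t, t ≠ s → ξ t = 0}
        = {ξ : lp H 2 | ∀ t, t ≠ g • s → ξ t = 0})
    (ξ : ℕ → lp H 2) (hξ : ∀ n, ‖ξ n‖ = 1)
    (hconv : ∀ g : G, Tendsto (fun n => ‖ρ g (ξ n) - ξ n‖) atTop (𝓝 0)) :
    (∀ n, HasSum (fun s => ‖(ξ n) s‖ ^ 2) 1) ∧
    (∀ g : G, Tendsto (fun n => ∑' s, |‖(ξ n) (g⁻¹ • s)‖ ^ 2 - ‖(ξ n) s‖ ^ 2|)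
      atTop (𝓝 0)) :=
  stmt12_general H ρ hρ ξ hξ hconv
end

section
/- Let G be a group acting on countable sets S and S', and let θ : S' → S be a G-equivariant surjection all of whose fibers θ⁻¹({s}) are finite. For a probability density p on S, define Φ(p) : S' → [0,∞) by Φ(p)(x) = p(θ(x)) / card(θ⁻¹({θ(x)})). Then: (1) Φ(p) is a probability density on S'; (2) Φ is G-equivariant, i.e., Φ(g·p) = g·Φ(p) for all g ∈ G; (3) Φ is an ℓ¹-isometry, i.e., Σ_{x∈S'} |Φ(p)(x) − Φ(q)(x)| = Σ_{s∈S} |p(s) − q(s)| for all probability densities p, q on S. -/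
/-!
`Φ(p)` spreads the mass `p(s)` uniformly over the finite, nonempty fibre `θ⁻¹{s}`, so summing
`Φ(p)` fibre by fibre gives back `p`; this yields (1), and applied to `|p - q|`, which `Φ`
commutes with, it yields (3). Equivariance of `θ` makes `g •` a bijection from `θ⁻¹{s}` onto
`θ⁻¹{g • s}`, so fibres in one orbit have the same size, which gives (2).
-/

/-- The map `Φ` induced by a `G`-equivariant finite-to-one surjection `θ : S' → S`,
sending a probability density `p` on `S` to the density
`Φ(p)(x) = p(θ x) / card (θ⁻¹{θ x})` on `S'`. -/
noncomputable def densityLift {S S' : Type*} (θ : S' → S) (p : S → ℝ) (x : S') : ℝ :=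
  p (θ x) / (θ ⁻¹' {θ x}).ncard

open Function Pointwise

section
variable {S S' : Type*} (θ : S' → S)

lemma densityLift_nonneg {p : S → ℝ} (hp : ∀ s, 0 ≤ p s) (x : S') : 0 ≤ densityLift θ p x :=
  div_nonneg (hp _) (Nat.cast_nonneg _)

lemma abs_densityLift_sub (p q : S → ℝ) (x : S') :
    |densityLift θ p x - densityLift θ q x| = densityLift θ (fun s => |p s - q s|) x := by
  simp only [densityLift, ← sub_div, abs_div, Nat.abs_cast]

lemma hasSum_densityLift_fiber (hθ : Surjective θ) (hfib : ∀ s, (θ ⁻¹' {s}).Finite)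
    (p : S → ℝ) (s : S) : HasSum (fun x : θ ⁻¹' {s} => densityLift θ p x) (p s) := by
  have : Fintype (θ ⁻¹' {s}) := (hfib s).fintype
  have hcard : ((θ ⁻¹' {s}).ncard : ℝ) ≠ 0 := by
    obtain ⟨x, rfl⟩ := hθ s
    exact Nat.cast_ne_zero.2 ((Set.ncard_pos (hfib _)).2 ⟨x, rfl⟩).ne'
  have hconst : ∀ x : θ ⁻¹' {s}, densityLift θ p x = p s / (θ ⁻¹' {s}).ncard := by
    rintro ⟨x, hx⟩
    rw [Set.mem_preimage, Set.mem_singleton_iff] at hx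
    simp only [densityLift, hx]
  convert hasSum_fintype (fun x : θ ⁻¹' {s} => densityLift θ p x)
  rw [Finset.sum_congr rfl fun x _ => hconst x, Finset.sum_const, Finset.card_univ,
    Fintype.card_eq_nat_card, Nat.card_coe_set_eq, nsmul_eq_mul, mul_div_cancel₀ _ hcard]

lemma hasSum_densityLift (hθ : Surjective θ) (hfib : ∀ s, (θ ⁻¹' {s}).Finite)
    {p : S → ℝ} (hp : ∀ s, 0 ≤ p s) {r : ℝ} (h : HasSum p r) :
    HasSum (densityLift θ p) r := by
  rw [← (Equiv.sigmaPreimageEquiv θ).hasSum_iff]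
  have hfiber := hasSum_densityLift_fiber θ hθ hfib p
  refine h.sigma_of_hasSum hfiber ?_
  rw [Function.comp_def, summable_sigma_of_nonneg fun _ => densityLift_nonneg θ hp _]
  refine ⟨fun s => (hfiber s).summable, ?_⟩
  convert h.summable with s
  exact (hfiber s).tsum_eq

lemma tsum_abs_densityLift_sub (hθ : Surjective θ) (hfib : ∀ s, (θ ⁻¹' {s}).Finite)
    {p q : S → ℝ} (hp : Summable p) (hq : Summable q) :
    ∑' x, |densityLift θ p x - densityLift θ q x| = ∑' s, |p s - q s| := by
  simp only [abs_densityLift_sub]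
  exact (hasSum_densityLift θ hθ hfib (fun _ => abs_nonneg _) (hp.sub hq).abs.hasSum).tsum_eq

variable {G : Type*} [Group G] [MulAction G S] [MulAction G S']

lemma preimage_singleton_smul (hθ : ∀ (g : G) (x : S'), θ (g • x) = g • θ x) (g : G) (s : S) :
    θ ⁻¹' {g • s} = g • θ ⁻¹' {s} := by
  ext x
  simp only [Set.mem_smul_set_iff_inv_smul_mem, Set.mem_preimage, Set.mem_singleton_iff, hθ,
    inv_smul_eq_iff]

lemma densityLift_comp_smul (hθ : ∀ (g : G) (x : S'), θ (g • x) = g • θ x) (p : S → ℝ) (g : G)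
    (x : S') : densityLift θ (fun s => p (g⁻¹ • s)) x = densityLift θ p (g⁻¹ • x) := by
  simp only [densityLift, hθ, preimage_singleton_smul θ hθ, Set.ncard_smul_set]

end

theorem stmt13_general {G S S' : Type*} [Group G]
    [MulAction G S] [MulAction G S']
    (θ : S' → S) (hθeq : ∀ (g : G) (x : S'), θ (g • x) = g • θ x)
    (hθsurj : Function.Surjective θ)
    (hfib : ∀ s : S, (θ ⁻¹' {s}).Finite) :
    (∀ p : S → ℝ, (∀ s, 0 ≤ p s) → HasSum p 1 →
      (∀ x, 0 ≤ densityLift θ p x) ∧ HasSum (densityLift θ p) 1) ∧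
    (∀ (p : S → ℝ) (g : G),
      densityLift θ (fun s => p (g⁻¹ • s)) = fun x => densityLift θ p (g⁻¹ • x)) ∧
    (∀ p q : S → ℝ, (∀ s, 0 ≤ p s) → HasSum p 1 → (∀ s, 0 ≤ q s) → HasSum q 1 →
      ∑' x, |densityLift θ p x - densityLift θ q x| = ∑' s, |p s - q s|) :=
  ⟨fun _ hp hp1 => ⟨densityLift_nonneg θ hp, hasSum_densityLift θ hθsurj hfib hp hp1⟩,
    fun p g => funext (densityLift_comp_smul θ hθeq p g),
    fun _ _ _ hp1 _ hq1 => tsum_abs_densityLift_sub θ hθsurj hfib hp1.summable hq1.summable⟩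

/-- Let `G` act on countable sets `S` and `S'` and let `θ : S' → S` be a `G`-equivariant
surjection with finite fibers. Then `Φ = densityLift θ` maps probability densities on `S`
to probability densities on `S'`, is `G`-equivariant, and is an `ℓ¹`-isometry. -/
theorem stmt13 {G S S' : Type*} [Group G] [Countable S] [Countable S']
    [MulAction G S] [MulAction G S']
    (θ : S' → S) (hθeq : ∀ (g : G) (x : S'), θ (g • x) = g • θ x)
    (hθsurj : Function.Surjective θ)
    (hfib : ∀ s : S, (θ ⁻¹' {s}).Finite) :
    (∀ p : S → ℝ, (∀ s, 0 ≤ p s) → HasSum p 1 →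
      (∀ x, 0 ≤ densityLift θ p x) ∧ HasSum (densityLift θ p) 1) ∧
    (∀ (p : S → ℝ) (g : G),
      densityLift θ (fun s => p (g⁻¹ • s)) = fun x => densityLift θ p (g⁻¹ • x)) ∧
    (∀ p q : S → ℝ, (∀ s, 0 ≤ p s) → HasSum p 1 → (∀ s, 0 ≤ q s) → HasSum q 1 →
      ∑' x, |densityLift θ p x - densityLift θ q x| = ∑' s, |p s - q s|) :=
  stmt13_general θ hθeq hθsurj hfib
end

section
/- Let G be a group acting on a countable set S. Suppose there exists a sequence (p_n) of probability densities on S such that for every g ∈ G, Σ_{s∈S} |p_n(g⁻¹ • s) − p_n(s)| → 0 as n → ∞. Then there exists a G-invariant mean on S, i.e., a linear functional m on the space of bounded real-valued functions on S such that m(f) ≥ 0 whenever f ≥ 0, m(1) = 1, and m(g·f) = m(f) for all g ∈ G and all bounded f, where (g·f)(s) = f(g⁻¹ • s). -/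
open Filter Topology BoundedContinuousFunction
open scoped BoundedContinuousFunction

/-! The averages `f ↦ ∑ₛ pₙ(s) f(s)` are states on `S →ᵇ ℝ`, and translating `f` by `g` changes
the `n`-th average by at most `‖f‖ · ∑ₛ |pₙ(g • s) − pₙ(s)|`, which tends to `0`. A limit of the
averages along a free ultrafilter on `ℕ` exists by compactness of bounded intervals, is linear,
positive and unital, and by the previous estimate it is `G`-invariant. -/

theorem exists_linearMap_tendsto_ultrafilter {ι E : Type*} [AddCommMonoid E] [Module ℝ E]
    (U : Ultrafilter ι) (Λ : ι → E →ₗ[ℝ] ℝ) (hΛ : ∀ x, ∃ C, ∀ i, |Λ i x| ≤ C) :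
    ∃ m : E →ₗ[ℝ] ℝ, ∀ x, Tendsto (fun i => Λ i x) U (𝓝 (m x)) := by
  have hlim : ∀ x, ∃ y, Tendsto (fun i => Λ i x) U (𝓝 y) := fun x => by
    obtain ⟨C, hC⟩ := hΛ x
    obtain ⟨y, -, hy⟩ := (isCompact_Icc (a := -C) (b := C)).ultrafilter_le_nhds
      (U.map fun i => Λ i x) (le_principal_iff.2 (mem_map.2 (univ_mem' fun i => abs_le.1 (hC i))))
    exact ⟨y, hy⟩
  choose L hL using hlim
  exact ⟨linearMapOfTendsto L Λ (tendsto_pi_nhds.2 hL), hL⟩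

namespace BoundedContinuousFunction

variable {S : Type*} [TopologicalSpace S]

theorem summable_mul_left {q : S → ℝ} (hq : Summable q) (f : S →ᵇ ℝ) :
    Summable fun s => q s * f s :=
  (hq.norm.mul_right ‖f‖).of_norm_bounded fun s => by
    rw [norm_mul]
    exact mul_le_mul_of_nonneg_left (f.norm_coe_le_norm s) (norm_nonneg _)

theorem abs_tsum_mul_le {q : S → ℝ} (hq : Summable q) (f : S →ᵇ ℝ) :
    |∑' s, q s * f s| ≤ (∑' s, |q s|) * ‖f‖ := by
  rw [← tsum_mul_right]
  calc |∑' s, q s * f s| ≤ ∑' s, |q s * f s| := by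
        simpa only [Real.norm_eq_abs] using norm_tsum_le_tsum_norm (summable_mul_left hq f).norm
    _ ≤ ∑' s, |q s| * ‖f‖ :=
        (summable_mul_left hq f).abs.tsum_le_tsum_of_inj id (fun _ _ h => h)
          (fun _ _ => by positivity) (fun s => by
            rw [abs_mul]
            exact mul_le_mul_of_nonneg_left (f.norm_coe_le_norm s) (abs_nonneg _))
          (hq.abs.mul_right _)

noncomputable def weightedSum (q : S → ℝ) (hq : Summable q) : (S →ᵇ ℝ) →ₗ[ℝ] ℝ where
  toFun f := ∑' s, q s * f s
  map_add' f g := by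
    simp only [coe_add, Pi.add_apply, mul_add]
    exact (summable_mul_left hq f).tsum_add (summable_mul_left hq g)
  map_smul' c f := by
    simp only [coe_smul, smul_eq_mul, RingHom.id_apply, mul_left_comm _ c, tsum_mul_left]

theorem weightedSum_apply {q : S → ℝ} (hq : Summable q) (f : S →ᵇ ℝ) :
    weightedSum q hq f = ∑' s, q s * f s :=
  rfl

theorem abs_tsum_mul_smul_sub_le {G : Type*} [Group G] [MulAction G S] {q : S → ℝ}
    (hq : Summable q) (g : G) (f : S →ᵇ ℝ) :
    |∑' s, q s * f (g⁻¹ • s) - ∑' s, q s * f s| ≤ (∑' s, |q (g • s) - q s|) * ‖f‖ := by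
  have hqg : Summable fun s => q (g • s) := (MulAction.toPerm g).summable_iff.mpr hq
  have hreindex : ∑' s, q s * f (g⁻¹ • s) = ∑' t, q (g • t) * f t := by
    rw [← (MulAction.toPerm g).tsum_eq]
    simp only [MulAction.toPerm_apply, inv_smul_smul]
  rw [hreindex, ← (summable_mul_left hqg f).tsum_sub (summable_mul_left hq f)]
  simp_rw [← sub_mul]
  exact abs_tsum_mul_le (hqg.sub hq) f

end BoundedContinuousFunction

theorem stmt14_general {G S : Type*} [Group G] [MulAction G S]
    [TopologicalSpace S] [DiscreteTopology S]
    (p : ℕ → S → ℝ) (hpos : ∀ n s, 0 ≤ p n s) (hsum : ∀ n, HasSum (p n) 1)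
    (hinv : ∀ g : G,
      Tendsto (fun n => ∑' s, |p n (g⁻¹ • s) - p n s|) atTop (𝓝 0)) :
    ∃ m : (S →ᵇ ℝ) →ₗ[ℝ] ℝ,
      (∀ f : S →ᵇ ℝ, (∀ s, 0 ≤ f s) → 0 ≤ m f) ∧
      m 1 = 1 ∧
      (∀ (g : G) (f : S →ᵇ ℝ),
        m (f.compContinuous ⟨fun s => g⁻¹ • s, continuous_of_discreteTopology⟩) = m f) := by
  set Λ : ℕ → (S →ᵇ ℝ) →ₗ[ℝ] ℝ := fun n => weightedSum (p n) (hsum n).summable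
  have habs : ∀ n, ∑' s, |p n s| = 1 := fun n => by
    simp only [abs_of_nonneg (hpos n _), (hsum n).tsum_eq]
  have hΛ : ∀ n f, |Λ n f| ≤ ‖f‖ := fun n f => by
    simpa only [Λ, weightedSum_apply, habs, one_mul] using abs_tsum_mul_le (hsum n).summable f
  set U : Ultrafilter ℕ := .of atTop
  obtain ⟨m, hm⟩ := exists_linearMap_tendsto_ultrafilter U Λ fun f => ⟨‖f‖, (hΛ · f)⟩
  refine ⟨m, fun f hf => ?_, ?_, fun g f => ?_⟩
  · exact ge_of_tendsto' (hm f) fun n => tsum_nonneg fun s => mul_nonneg (hpos n s) (hf s)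
  · refine tendsto_nhds_unique (hm 1) (tendsto_const_nhds.congr fun n => ?_)
    simp [Λ, weightedSum_apply, (hsum n).tsum_eq]
  · have htranslate : Tendsto (fun n => Λ n (f.compContinuous
        ⟨fun s => g⁻¹ • s, continuous_of_discreteTopology⟩) - Λ n f) U (𝓝 0) := by
      have hbound : Tendsto (fun n => (∑' s, |p n (g • s) - p n s|) * ‖f‖) atTop (𝓝 0) := by
        simpa using (hinv g⁻¹).mul_const ‖f‖
      exact (squeeze_zero_norm (fun n => abs_tsum_mul_smul_sub_le (hsum n).summable g f)
        hbound).mono_left (Ultrafilter.of_le _)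
    refine tendsto_nhds_unique (hm _) ?_
    simpa using htranslate.add (hm f)

/-- If a group `G` acting on a countable set `S` admits a sequence of probability
densities `p_n` on `S` with `Σ_s |p_n(g⁻¹ • s) − p_n(s)| → 0` for every `g ∈ G`,
then there is a `G`-invariant mean on `S` (a positive, unital, `G`-invariant linear
functional on the bounded real-valued functions on `S`). -/
theorem stmt14 {G S : Type*} [Group G] [Countable S] [MulAction G S]
    [TopologicalSpace S] [DiscreteTopology S]
    (p : ℕ → S → ℝ) (hpos : ∀ n s, 0 ≤ p n s) (hsum : ∀ n, HasSum (p n) 1)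
    (hinv : ∀ g : G,
      Tendsto (fun n => ∑' s, |p n (g⁻¹ • s) - p n s|) atTop (𝓝 0)) :
    ∃ m : (S →ᵇ ℝ) →ₗ[ℝ] ℝ,
      (∀ f : S →ᵇ ℝ, (∀ s, 0 ≤ f s) → 0 ≤ m f) ∧
      m 1 = 1 ∧
      (∀ (g : G) (f : S →ᵇ ℝ),
        m (f.compContinuous ⟨fun s => g⁻¹ • s, continuous_of_discreteTopology⟩) = m f) :=
  stmt14_general p hpos hsum hinv
end
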